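/- (Properties of pruning) Let L be any of the modal systems K_nD, D_nD, T_nD, K45_nD, KD45_nD, S5_nD, let P ⊆ 𝒫 be finite, and let δ ∈ D^P_k(L) with k ≥ l. Then: (1) δ ⊨ δ^{↓l} (over all Kripke models); (2) δ^{↓l} ∈ D^P_{k−l}(L); (3) δ^{↑l} ∈ D^P_l(L); (4) for every h ∈ ℕ and every γ ∈ D^P_{k+h}(L), γ^{↓h} = γ^{↑k} = (γ^{↓h})^{↑k}; (5) for all k₁, k₂ ∈ ℕ with l ≤ min{k, k₁, k₂}, (δ^{↑k₁})^{↑l} = (δ^{↑k₂})^{↑l}. -/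

import Mathlib

/-!
Common framework: multi-agent epistemic modal logic with distributed knowledge.
Agents are `Fin n`, atoms are natural numbers.
-/

namespace DKLogic

/-- Formulas of the language `L_D`: atoms, negation, conjunction, disjunction and the
distributed-knowledge modality `D_B` for nonempty sets `B` of agents (together with the
constants `⊤`/`⊥`, which the paper uses as the empty conjunction/disjunction). -/
inductive Formula (n : ℕ) : Type
  | top : Formula n
  | bot : Formula n
  | atom : ℕ → Formula n
  | neg : Formula n → Formula n
  | and : Formula n → Formula n → Formula n
  | or : Formula n → Formula n → Formula n
  | D : {B : Finset (Fin n) // B.Nonempty} → Formula n → Formula n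

namespace Formula

/-- Modal depth of a formula. -/
def depth {n : ℕ} : Formula n → ℕ
  | top => 0
  | bot => 0
  | atom _ => 0
  | neg φ => depth φ
  | and φ ψ => max (depth φ) (depth ψ)
  | or φ ψ => max (depth φ) (depth ψ)
  | D _ φ => depth φ + 1

/-- The atoms occurring in a formula. -/
def atoms {n : ℕ} : Formula n → Finset ℕ
  | top => ∅
  | bot => ∅
  | atom q => {q}
  | neg φ => atoms φ
  | and φ ψ => atoms φ ∪ atoms ψ
  | or φ ψ => atoms φ ∪ atoms ψ
  | D _ φ => atoms φ

end Formula

/-- A Kripke model over world type `W` with `n` agents. -/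
structure KModel (n : ℕ) (W : Type) where
  R : Fin n → W → W → Prop
  V : W → Set ℕ

/-- The distributed accessibility relation `R_B = ⋂_{i ∈ B} R_i`. -/
def KModel.RB {n : ℕ} {W : Type} (M : KModel n W) (B : Finset (Fin n)) (s t : W) : Prop :=
  ∀ i ∈ B, M.R i s t

/-- Satisfaction. -/
def Sat {n : ℕ} {W : Type} (M : KModel n W) : W → Formula n → Prop
  | _, .top => True
  | _, .bot => False
  | s, .atom q => q ∈ M.V s
  | s, .neg φ => ¬ Sat M s φ
  | s, .and φ ψ => Sat M s φ ∧ Sat M s ψ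
  | s, .or φ ψ => Sat M s φ ∨ Sat M s ψ
  | s, .D B φ => ∀ t : W, M.RB B.1 s t → Sat M t φ

/-- Seriality of a relation. -/
def Serial {W : Type} (R : W → W → Prop) : Prop := ∀ x, ∃ y, R x y

/-- Euclideanness of a relation. -/
def Euclidean {W : Type} (R : W → W → Prop) : Prop := ∀ x y z, R x y → R x z → R y z

/-- The six modal systems. -/
inductive MSys : Type
  | K | D | T | K45 | KD45 | S5

/-- `L`-models: frame conditions on each accessibility relation for each system. -/
def IsModel {n : ℕ} {W : Type} : MSys → KModel n W → Prop
  | .K, _ => True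
  | .D, M => ∀ i, Serial (M.R i)
  | .T, M => ∀ i, Reflexive (M.R i)
  | .K45, M => ∀ i, Transitive (M.R i) ∧ Euclidean (M.R i)
  | .KD45, M => ∀ i, Serial (M.R i) ∧ Transitive (M.R i) ∧ Euclidean (M.R i)
  | .S5, M => ∀ i, Reflexive (M.R i) ∧ Transitive (M.R i) ∧ Euclidean (M.R i)

/-- Semantic consequence over `L`-models. -/
def Entails {n : ℕ} (L : MSys) (φ ψ : Formula n) : Prop :=
  ∀ (W : Type) (M : KModel n W), IsModel L M → ∀ s : W, Sat M s φ → Sat M s ψ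

/-- Semantic equivalence over `L`-models. -/
def EquivL {n : ℕ} (L : MSys) (φ ψ : Formula n) : Prop :=
  Entails L φ ψ ∧ Entails L ψ φ

/-- `L`-satisfiability. -/
def SatL {n : ℕ} (L : MSys) (φ : Formula n) : Prop :=
  ∃ (W : Type) (M : KModel n W) (s : W), IsModel L M ∧ Sat M s φ

/-- Collective `p`-bisimulation between two pointed models. -/
def CollPBisim {n : ℕ} {W W' : Type} (M : KModel n W) (s : W) (M' : KModel n W') (s' : W')
    (p : ℕ) : Prop :=
  ∃ ρ : W → W' → Prop, ρ s s' ∧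
    ∀ u u', ρ u u' →
      ((∀ q : ℕ, q ≠ p → (q ∈ M.V u ↔ q ∈ M'.V u')) ∧
       (∀ B : Finset (Fin n), B.Nonempty → ∀ v, M.RB B u v → ∃ v', M'.RB B u' v' ∧ ρ v v') ∧
       (∀ B : Finset (Fin n), B.Nonempty → ∀ v', M'.RB B u' v' → ∃ v, M.RB B u v ∧ ρ v v'))

/-- `ψ` is a result of forgetting `p` in `φ` in system `L`
(written `dforget_L(φ,p) ≡_L ψ` in the paper). -/
def IsForget {n : ℕ} (L : MSys) (φ : Formula n) (p : ℕ) (ψ : Formula n) : Prop :=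
  ψ.atoms ⊆ φ.atoms.erase p ∧
  (∀ (W W' : Type) (M : KModel n W) (M' : KModel n W') (s : W) (s' : W'),
      IsModel L M → IsModel L M' → Sat M s φ → CollPBisim M s M' s' p → Sat M' s' ψ) ∧
  (∀ (W' : Type) (M' : KModel n W') (s' : W'),
      IsModel L M' → Sat M' s' ψ →
      ∃ (W : Type) (M : KModel n W) (s : W), IsModel L M ∧ Sat M s φ ∧ CollPBisim M s M' s' p)

/-- `L` is closed under forgetting: `dforget_L(φ,p)` exists (as an `L`-satisfiable formula)
for every `L`-satisfiable `φ` and every atom `p`. -/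
def ClosedUnderForgetting {n : ℕ} (L : MSys) : Prop :=
  ∀ (φ : Formula n) (p : ℕ), SatL L φ → ∃ ψ : Formula n, SatL L ψ ∧ IsForget L φ p ψ

/-- `ψ` is a uniform interpolant of `φ` in `L` over `P \ {p}`. -/
def IsUI {n : ℕ} (L : MSys) (P : Finset ℕ) (p : ℕ) (φ ψ : Formula n) : Prop :=
  SatL L ψ ∧ ψ.atoms ⊆ P.erase p ∧
  ∀ χ : Formula n, p ∉ χ.atoms → (Entails L φ χ ↔ Entails L ψ χ)

/-- The uniform interpolation property for the system `L`. -/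
def HasUIP {n : ℕ} (L : MSys) : Prop :=
  ∀ (P : Finset ℕ) (p : ℕ) (φ : Formula n),
    p ∈ P → φ.atoms ⊆ P → SatL L φ → ∃ ψ : Formula n, IsUI L P p φ ψ

/-! ### Canonical formulas -/

/-- Big conjunction of a list of formulas (`⊤` for the empty list). -/
def bigAnd {n : ℕ} : List (Formula n) → Formula n
  | [] => .top
  | φ :: l => .and φ (bigAnd l)

/-- Big disjunction of a list of formulas (`⊥` for the empty list). -/
def bigOr {n : ℕ} : List (Formula n) → Formula n
  | [] => .bot
  | φ :: l => .or φ (bigOr l)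

/-- An injective numerical code of formulas, used to fix a canonical ordering. -/
def fcode {n : ℕ} : Formula n → ℕ
  | .top => Nat.pair 0 0
  | .bot => Nat.pair 1 0
  | .atom q => Nat.pair 2 q
  | .neg φ => Nat.pair 3 (fcode φ)
  | .and φ ψ => Nat.pair 4 (Nat.pair (fcode φ) (fcode ψ))
  | .or φ ψ => Nat.pair 5 (Nat.pair (fcode φ) (fcode ψ))
  | .D B φ => Nat.pair 6 (Nat.pair (B.1.sum fun i => 2 ^ (i : ℕ)) (fcode φ))

/-- Insert a formula into a strictly `fcode`-sorted list (dropping duplicates). -/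
def insertF {n : ℕ} (φ : Formula n) : List (Formula n) → List (Formula n)
  | [] => [φ]
  | ψ :: l =>
      if fcode φ < fcode ψ then φ :: ψ :: l
      else if fcode φ = fcode ψ then ψ :: l
      else ψ :: insertF φ l

/-- The canonical (sorted, duplicate-free) list representing the set of formulas in `l`. -/
def normList {n : ℕ} (l : List (Formula n)) : List (Formula n) := l.foldr insertF []

/-- The minterm of `P` that is positive exactly on `S`. -/
def minterm {n : ℕ} (P S : Finset ℕ) : Formula n :=
  bigAnd ((P.sort (· ≤ ·)).map fun q =>
    if q ∈ S then Formula.atom q else Formula.neg (Formula.atom q))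

/-- The subset of `Fin n` whose characteristic bits are those of `m`. -/
def natToFinset (n m : ℕ) : Finset (Fin n) :=
  Finset.univ.filter fun i => m.testBit (i : ℕ)

/-- A canonical enumeration of all nonempty subsets of the agent set. -/
def neSubsets (n : ℕ) : List {B : Finset (Fin n) // B.Nonempty} :=
  ((List.range (2 ^ n)).map (natToFinset n)).filterMap fun B =>
    if h : B.Nonempty then some ⟨B, h⟩ else none

/-- `∇_B Φ = D_B (⋁Φ) ∧ ⋀_{φ ∈ Φ} ¬ D_B ¬ φ`. -/
def nabla {n : ℕ} (B : {B : Finset (Fin n) // B.Nonempty}) (Φ : List (Formula n)) : Formula n :=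
  Formula.and (Formula.D B (bigOr Φ))
    (bigAnd (Φ.map fun φ => Formula.neg (Formula.D B (Formula.neg φ))))

/-- Underlying data of a d-canonical formula: a set of (positive) atoms together with,
for every set `B` of agents, a list of successor data. -/
inductive CData (n : ℕ) : Type
  | mk (S : Finset ℕ) (succ : Finset (Fin n) → List (CData n)) : CData n

/-- The positive-atom component. -/
def CData.S {n : ℕ} : CData n → Finset ℕ
  | mk S _ => S

/-- The `B`-successor data. -/
def CData.succ {n : ℕ} : CData n → Finset (Fin n) → List (CData n)
  | mk _ f => f

/-- The d-canonical formula of depth `k` over `P` determined by the data `d`: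
`δ_0 ∧ ⋀_{B} ∇_B Φ_B`. -/
def toFormula {n : ℕ} (P : Finset ℕ) : ℕ → CData n → Formula n
  | 0, d => minterm P (d.S ∩ P)
  | (k+1), d =>
      Formula.and (minterm P (d.S ∩ P))
        (bigAnd ((neSubsets n).map fun B =>
          nabla B (normList ((d.succ B.1).map fun c => toFormula P k c))))

/-- `D^P_k`: the set of d-canonical formulas of depth `k` over `P`. -/
def DP {n : ℕ} (P : Finset ℕ) (k : ℕ) : Set (Formula n) := Set.range (toFormula P k)

/-- `R_B(δ)` for `δ` the level-`k` canonical formula with data `d`: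
the set of `B`-successor canonical formulas (of level `k - 1`). -/
def RBset {n : ℕ} (P : Finset ℕ) (k : ℕ) (d : CData n) (B : Finset (Fin n)) :
    Set (Formula n) :=
  {φ | ∃ c ∈ d.succ B, φ = toFormula P (k - 1) c}

/-- One pruning step `δ ↦ δ^↓` on data (first argument: the level of the input). -/
def downD {n : ℕ} : ℕ → CData n → CData n
  | 0, d => d
  | 1, d => CData.mk d.S (fun _ => [])
  | (k+2), d => CData.mk d.S (fun B => (d.succ B).map fun c => downD (k+1) c)

/-- `l`-fold pruning `δ ↦ δ^{↓l}` on data (first argument: the level of the input). -/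
def downIter {n : ℕ} : ℕ → ℕ → CData n → CData n
  | _, 0, d => d
  | k, (l+1), d => downIter (k-1) l (downD k d)

/-- Truncation `δ ↦ δ^{↑l}` on data (first argument: the level of the input). -/
def upD {n : ℕ} : ℕ → ℕ → CData n → CData n
  | _, 0, d => CData.mk d.S (fun _ => [])
  | 0, (_+1), d => d
  | (k+1), (l+1), d => CData.mk d.S (fun B => (d.succ B).map fun c => upD k l c)

/-- The canonical formula `δ` of level `k` with data `d`. -/
def cf {n : ℕ} (P : Finset ℕ) (k : ℕ) (d : CData n) : Formula n := toFormula P k d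

/-- `δ^{↓l}` (a canonical formula of level `k - l`). -/
def cfDown {n : ℕ} (P : Finset ℕ) (k l : ℕ) (d : CData n) : Formula n :=
  toFormula P (k - l) (downIter k l d)

/-- `δ^{↑l}` (a canonical formula of level `min k l`). -/
def cfUp {n : ℕ} (P : Finset ℕ) (k l : ℕ) (d : CData n) : Formula n :=
  toFormula P (min k l) (upD k l d)

/-- Literal elimination: `φ^p` replaces every occurrence of `¬p` by `⊤` and subsequently
every remaining occurrence of `p` by `⊤`. -/
def elim {n : ℕ} (p : ℕ) : Formula n → Formula n
  | .top => .top
  | .bot => .bot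
  | .atom q => if q = p then .top else .atom q
  | .neg (.atom q) => if q = p then .top else .neg (.atom q)
  | .neg φ => .neg (elim p φ)
  | .and φ ψ => .and (elim p φ) (elim p ψ)
  | .or φ ψ => .or (elim p φ) (elim p ψ)
  | .D B φ => .D B (elim p φ)


/-!
Pruning and truncation never change the low levels of the underlying data: for every level `j`
up to the level of the result, `toFormula P j` of the pruned or truncated data coincides with
`toFormula P j` of the original data. Hence `δ^{↓l}` and `δ^{↑l}` are simply the canonical
formulas of levels `k - l` and `min k l` read off the data of `δ`, which gives all the identities.
The semantic claims then follow because the level-`k` canonical formula of some data entails its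
canonical formula of every lower level `j`: each `∇_B` conjunct survives when its successor
formulas are weakened.
-/

section Canonical

variable {n : ℕ}

lemma sum_two_pow_val_injective :
    Function.Injective fun B : Finset (Fin n) => B.sum fun i => 2 ^ (i : ℕ) := by
  intro B B' h
  have hval : B.map Fin.valEmbedding = B'.map Fin.valEmbedding :=
    Finset.geomSum_injective le_rfl (by simp only [Finset.sum_map]; exact h)
  exact Finset.map_injective _ hval

lemma fcode_injective : Function.Injective (fcode (n := n)) := by
  intro φ ψ h
  induction φ generalizing ψ <;> cases ψ <;> simp only [fcode, Nat.pair_eq_pair] at h <;>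
    try grind
  case D.D B φ ih B' ψ => rw [Subtype.ext (sum_two_pow_val_injective h.2.1), ih h.2.2]

lemma mem_insertF {φ x : Formula n} {l : List (Formula n)} :
    x ∈ insertF φ l ↔ x = φ ∨ x ∈ l := by
  induction l with
  | nil => simp [insertF]
  | cons ψ l ih =>
    simp only [insertF]
    split_ifs with _ heq
    · simp
    · rw [fcode_injective heq]
      simp
    · simp only [List.mem_cons, ih]
      tauto

lemma mem_normList {x : Formula n} {l : List (Formula n)} :
    x ∈ normList l ↔ x ∈ l := by
  induction l with
  | nil => simp [normList]
  | cons φ l ih =>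
    change x ∈ insertF φ (normList l) ↔ _
    rw [mem_insertF, ih, List.mem_cons]

variable {W : Type} {M : KModel n W} {s : W}

lemma sat_bigAnd {l : List (Formula n)} : Sat M s (bigAnd l) ↔ ∀ φ ∈ l, Sat M s φ := by
  induction l with
  | nil => simp [bigAnd, Sat]
  | cons φ l ih => simp [bigAnd, Sat, ih]

lemma sat_bigOr {l : List (Formula n)} : Sat M s (bigOr l) ↔ ∃ φ ∈ l, Sat M s φ := by
  induction l with
  | nil => simp [bigOr, Sat]
  | cons φ l ih => simp [bigOr, Sat, ih]

lemma sat_nabla {B : {B : Finset (Fin n) // B.Nonempty}} {Φ : List (Formula n)} :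
    Sat M s (nabla B Φ) ↔
      (∀ t, M.RB B.1 s t → ∃ φ ∈ Φ, Sat M t φ) ∧ ∀ φ ∈ Φ, ∃ t, M.RB B.1 s t ∧ Sat M t φ := by
  simp [nabla, Sat, sat_bigAnd, sat_bigOr]

lemma sat_nabla_normList_map_mono {B : {B : Finset (Fin n) // B.Nonempty}} {α : Type}
    {f g : α → Formula n} {l : List α} (hfg : ∀ c ∈ l, ∀ t, Sat M t (f c) → Sat M t (g c))
    (h : Sat M s (nabla B (normList (l.map f)))) : Sat M s (nabla B (normList (l.map g))) := by
  simp only [sat_nabla, mem_normList, List.mem_map, exists_exists_and_eq_and,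
    forall_exists_index, and_imp, forall_apply_eq_imp_iff₂] at h ⊢
  exact ⟨fun t ht => (h.1 t ht).imp fun c hc => ⟨hc.1, hfg c hc.1 t hc.2⟩,
    fun c hc => (h.2 c hc).imp fun t ht => ⟨ht.1, hfg c hc t ht.2⟩⟩

lemma sat_toFormula_succ {P : Finset ℕ} {k : ℕ} {d : CData n} :
    Sat M s (toFormula P (k + 1) d) ↔ Sat M s (minterm P (d.S ∩ P)) ∧
      ∀ B ∈ neSubsets n, Sat M s (nabla B (normList ((d.succ B.1).map (toFormula P k)))) := by
  simp only [toFormula, Sat, sat_bigAnd, List.forall_mem_map]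

lemma sat_toFormula_of_le (P : Finset ℕ) {j k : ℕ} (hjk : j ≤ k) (d : CData n)
    (h : Sat M s (toFormula P k d)) : Sat M s (toFormula P j d) := by
  induction j generalizing k d s with
  | zero =>
    cases k with
    | zero => exact h
    | succ k => exact (sat_toFormula_succ.1 h).1
  | succ j ih =>
    obtain ⟨k, rfl⟩ : ∃ k', k = k' + 1 := ⟨k - 1, by omega⟩
    obtain ⟨hw, hsucc⟩ := sat_toFormula_succ.1 h
    exact sat_toFormula_succ.2 ⟨hw, fun B hB => sat_nabla_normList_map_mono
      (fun c _ t => ih (by omega) c) (hsucc B hB)⟩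

end Canonical

lemma entails_toFormula_of_le {n : ℕ} (L : MSys) (P : Finset ℕ) {j k : ℕ} (hjk : j ≤ k)
    (d : CData n) : Entails L (toFormula P k d) (toFormula P j d) :=
  fun _ _ _ _ => sat_toFormula_of_le P hjk d

lemma SatL.of_entails_K {n : ℕ} {L : MSys} {φ ψ : Formula n} (hφψ : Entails MSys.K φ ψ)
    (hφ : SatL L φ) : SatL L ψ := by
  obtain ⟨W, M, s, hM, hs⟩ := hφ
  exact ⟨W, M, s, hM, hφψ W M trivial s hs⟩

namespace CData

variable {n : ℕ}

lemma toFormula_zero_congr (P : Finset ℕ) {d e : CData n} (hS : e.S = d.S) :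
    toFormula P 0 e = toFormula P 0 d := by
  simp only [toFormula, hS]

lemma toFormula_succ_congr (P : Finset ℕ) {k : ℕ} {d e : CData n} (hS : e.S = d.S)
    (hsucc : ∀ B, (e.succ B).map (toFormula P k) = (d.succ B).map (toFormula P k)) :
    toFormula P (k + 1) e = toFormula P (k + 1) d := by
  simp only [toFormula, hS, hsucc]

lemma S_downD (k : ℕ) (d : CData n) : (downD k d).S = d.S := by
  match k with
  | 0 | 1 | _ + 2 => rfl

lemma S_upD (k l : ℕ) (d : CData n) : (upD k l d).S = d.S := by
  cases k <;> cases l <;> rfl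

lemma toFormula_downD (P : Finset ℕ) {j m : ℕ} (hjm : j < m) (d : CData n) :
    toFormula P j (downD m d) = toFormula P j d := by
  induction j generalizing m d with
  | zero => exact toFormula_zero_congr P (S_downD m d)
  | succ j ih =>
    obtain ⟨m, rfl⟩ : ∃ m', m = m' + 2 := ⟨m - 2, by omega⟩
    refine toFormula_succ_congr P (S_downD _ d) fun B => ?_
    change ((d.succ B).map (downD (m + 1))).map _ = _
    rw [List.map_map]
    exact List.map_congr_left fun c _ => ih (by omega) c

lemma toFormula_downIter (P : Finset ℕ) {j m : ℕ} (l : ℕ) (hjm : j + l ≤ m) (d : CData n) :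
    toFormula P j (downIter m l d) = toFormula P j d := by
  induction l generalizing m d with
  | zero => rfl
  | succ l ih =>
    change toFormula P j (downIter (m - 1) l (downD m d)) = _
    rw [ih (by omega), toFormula_downD P (by omega)]

lemma toFormula_upD (P : Finset ℕ) {j m l : ℕ} (hjm : j ≤ m) (hjl : j ≤ l) (d : CData n) :
    toFormula P j (upD m l d) = toFormula P j d := by
  induction j generalizing m l d with
  | zero => exact toFormula_zero_congr P (S_upD m l d)
  | succ j ih =>
    obtain ⟨m, rfl⟩ : ∃ m', m = m' + 1 := ⟨m - 1, by omega⟩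
    obtain ⟨l, rfl⟩ : ∃ l', l = l' + 1 := ⟨l - 1, by omega⟩
    refine toFormula_succ_congr P (S_upD _ _ d) fun B => ?_
    change ((d.succ B).map (upD m l)).map _ = _
    rw [List.map_map]
    exact List.map_congr_left fun c _ => ih (by omega) (by omega) c

end CData

open CData

lemma cfDown_eq_toFormula {n : ℕ} (P : Finset ℕ) {k l : ℕ} (hlk : l ≤ k) (d : CData n) :
    cfDown P k l d = toFormula P (k - l) d :=
  toFormula_downIter P l (by omega) d

lemma cfUp_eq_toFormula {n : ℕ} (P : Finset ℕ) (k l : ℕ) (d : CData n) :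
    cfUp P k l d = toFormula P (min k l) d :=
  toFormula_upD P (min_le_left k l) (min_le_right k l) d

/-- properties of pruning. -/
theorem pruning_properties {n : ℕ} (L : MSys) (P : Finset ℕ) (k l : ℕ) (hkl : l ≤ k)
    (d : CData n) (hsat : SatL L (cf P k d)) :
    -- (1) δ ⊨ δ^{↓l} over all Kripke models
    Entails MSys.K (cf P k d) (cfDown P k l d) ∧
    -- (2) δ^{↓l} ∈ D^P_{k−l}(L)
    (cfDown P k l d ∈ DP P (k - l) ∧ SatL L (cfDown P k l d)) ∧
    -- (3) δ^{↑l} ∈ D^P_l(L)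
    (cfUp P k l d ∈ DP P l ∧ SatL L (cfUp P k l d)) ∧
    -- (4) for γ ∈ D^P_{k+h}(L): γ^{↓h} = γ^{↑k} = (γ^{↓h})^{↑k}
    (∀ (h : ℕ) (e : CData n), SatL L (cf P (k + h) e) →
      cfDown P (k + h) h e = cfUp P (k + h) k e ∧
      cfUp P (k + h) k e = cfUp P k k (downIter (k + h) h e)) ∧
    -- (5) (δ^{↑k₁})^{↑l} = (δ^{↑k₂})^{↑l} whenever l ≤ min {k, k₁, k₂}
    (∀ k₁ k₂ : ℕ, l ≤ k₁ → l ≤ k₂ →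
      cfUp P (min k k₁) l (upD k k₁ d) = cfUp P (min k k₂) l (upD k k₂ d)) := by
  have down_entailed : Entails MSys.K (cf P k d) (cfDown P k l d) := by
    rw [cfDown_eq_toFormula P hkl]
    exact entails_toFormula_of_le _ P (Nat.sub_le k l) d
  have up_entailed : Entails MSys.K (cf P k d) (cfUp P k l d) := by
    rw [cfUp_eq_toFormula]
    exact entails_toFormula_of_le _ P (min_le_left k l) d
  have up_twice (m : ℕ) (hlm : l ≤ m) : cfUp P (min k m) l (upD k m d) = toFormula P l d := by
    rw [cfUp_eq_toFormula, min_eq_right (le_min hkl hlm), toFormula_upD P hkl hlm]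
  refine ⟨down_entailed, ⟨⟨_, rfl⟩, hsat.of_entails_K down_entailed⟩,
    ⟨⟨upD k l d, by rw [cfUp, min_eq_right hkl]⟩, hsat.of_entails_K up_entailed⟩,
    fun h e _ => ?_, fun k₁ k₂ h₁ h₂ => by rw [up_twice k₁ h₁, up_twice k₂ h₂]⟩
  rw [cfDown_eq_toFormula P (Nat.le_add_left h k), cfUp_eq_toFormula, cfUp_eq_toFormula,
    min_self, toFormula_downIter P h le_rfl, Nat.add_sub_cancel,
    min_eq_right (Nat.le_add_right k h)]
  exact ⟨rfl, rfl⟩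

end DKLogic
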